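/- arXiv:2305.14805 — 13 statements merged into one kernel-verified Lean document; each statement's English description precedes it below -/
import Mathlib

section
/- The function Φ(p) = p/(γ-1) - E + |m|^2/(E+p) + D·sqrt(1 - |m|^2/(E+p)^2) is strictly monotonically increasing on [0, +∞), satisfies Φ(0) < 0, and tends to +∞ as p → +∞; consequently the equation Φ(p) = 0 admits a unique positive solution. -/
theorem stmt1 (D M E γ : ℝ) (hM : 0 ≤ M) (hD : 0 < D)
    (hE : Real.sqrt (D^2 + M^2) < E) (hγ1 : 1 < γ) (hγ2 : γ ≤ 2) :
    let Φ : ℝ → ℝ := fun p =>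
      p/(γ-1) - E + M^2/(E+p) + D * Real.sqrt (1 - M^2/(E+p)^2)
    StrictMonoOn Φ (Set.Ici 0) ∧
    Φ 0 < 0 ∧
    Filter.Tendsto Φ Filter.atTop Filter.atTop ∧
    (∃! p : ℝ, 0 < p ∧ Φ p = 0) := by
  intro Φ
  have hs0 : (0:ℝ) ≤ Real.sqrt (D^2 + M^2) := Real.sqrt_nonneg _
  have hE0 : 0 < E := lt_of_le_of_lt hs0 hE
  have hsq : Real.sqrt (D^2+M^2) ^ 2 = D^2 + M^2 := Real.sq_sqrt (by positivity)
  have hEsq : D^2 + M^2 < E^2 := by nlinarith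
  have hME : M^2 < E^2 := by nlinarith
  have hγ : 0 < γ - 1 := by linarith
  -- derivative
  have hderiv : ∀ p : ℝ, 0 ≤ p → HasDerivAt Φ
      (1/(γ-1) - M^2/(E+p)^2
        + D * (M^2 / ((E+p)^3 * Real.sqrt (1 - M^2/(E+p)^2)))) p := by
    intro p hp
    have hu : (0:ℝ) < E + p := by linarith
    have hu2 : M^2 < (E+p)^2 := by nlinarith
    have harg : 0 < 1 - M^2/(E+p)^2 := by
      rw [sub_pos, div_lt_one (by positivity)]; exact hu2
    have hsqrt : 0 < Real.sqrt (1 - M^2/(E+p)^2) := Real.sqrt_pos.mpr harg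
    have hA : HasDerivAt (fun q : ℝ => E + q) 1 p := (hasDerivAt_id p).const_add E
    have h1 : HasDerivAt (fun q : ℝ => q/(γ-1)) (1/(γ-1)) p := (hasDerivAt_id p).div_const _
    have h2 : HasDerivAt (fun q : ℝ => M^2/(E+q))
        ((0 * (E+p) - M^2 * 1)/(E+p)^2) p :=
      (hasDerivAt_const p (M^2)).div hA hu.ne'
    have h3 : HasDerivAt (fun q : ℝ => (E+q)^2) ((2:ℕ) * (E+p)^(2-1) * 1) p := hA.pow 2
    have h4 : HasDerivAt (fun q : ℝ => M^2/(E+q)^2)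
        ((0 * (E+p)^2 - M^2 * ((2:ℕ) * (E+p)^(2-1) * 1))/((E+p)^2)^2) p :=
      (hasDerivAt_const p (M^2)).div h3 (by positivity)
    have h5 : HasDerivAt (fun q : ℝ => 1 - M^2/(E+q)^2)
        (-((0 * (E+p)^2 - M^2 * ((2:ℕ) * (E+p)^(2-1) * 1))/((E+p)^2)^2)) p :=
      h4.const_sub 1
    have h6 := (h5.sqrt harg.ne').const_mul D
    have h := ((h1.sub_const E).add h2).add h6
    set u := E + p with hu_def
    set S := Real.sqrt (1 - M^2/u^2) with hS_def
    convert h using 1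
    case e'_4 => rfl
    case e'_5 => rfl
    case e'_8 => rfl
    push_cast
    rw [pow_one]
    field_simp
    ring
  have hpos : ∀ p : ℝ, 0 ≤ p →
      0 < 1/(γ-1) - M^2/(E+p)^2
        + D * (M^2 / ((E+p)^3 * Real.sqrt (1 - M^2/(E+p)^2))) := by
    intro p hp
    have hu : (0:ℝ) < E + p := by linarith
    have hu2 : M^2 < (E+p)^2 := by nlinarith
    have h1 : (1:ℝ) ≤ 1/(γ-1) := by
      rw [le_div_iff₀ hγ]; linarith
    have h2 : M^2/(E+p)^2 < 1 := by
      rw [div_lt_one (by positivity)]; exact hu2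
    have h3 : 0 ≤ D * (M^2 / ((E+p)^3 * Real.sqrt (1 - M^2/(E+p)^2))) := by
      positivity
    linarith
  have hmono : StrictMonoOn Φ (Set.Ici 0) := by
    apply strictMonoOn_of_deriv_pos (convex_Ici 0)
    · intro p hp
      exact ((hderiv p hp).continuousAt).continuousWithinAt
    · intro p hp
      rw [interior_Ici] at hp
      rw [(hderiv p (le_of_lt hp)).deriv]
      exact hpos p (le_of_lt hp)
  refine ⟨hmono, ?_, ?_, ?_⟩
  · -- Φ 0 < 0
    have ht : Real.sqrt (1 - M^2/(E+0)^2) = Real.sqrt (E^2 - M^2) / E := by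
      rw [add_zero, show (1 - M^2/E^2) = (E^2-M^2)/E^2 by field_simp,
        Real.sqrt_div (by nlinarith) , Real.sqrt_sq hE0.le]
    set t := Real.sqrt (E^2 - M^2) with hdt
    have htsq : t^2 = E^2 - M^2 := Real.sq_sqrt (by nlinarith)
    have hDt : D < t := by
      rw [hdt]
      exact (Real.lt_sqrt hD.le).mpr (by nlinarith)
    have ht0 : 0 < t := lt_of_le_of_lt hD.le hDt
    show 0/(γ-1) - E + M^2/(E+0) + D * Real.sqrt (1 - M^2/(E+0)^2) < 0
    rw [ht, add_zero, zero_div]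
    have hlt : M^2/E + D * (t/E) < E := by
      have h : (M^2 + D*t)/E < E := by rw [div_lt_iff₀ hE0]; nlinarith
      calc M^2/E + D * (t/E) = (M^2 + D*t)/E := by ring
        _ < E := h
    linarith
  · -- tendsto
    have hbase : Filter.Tendsto (fun p : ℝ => p/(γ-1) - E) Filter.atTop Filter.atTop := by
      have := (Filter.tendsto_id.atTop_div_const hγ : Filter.Tendsto (fun p : ℝ => p/(γ-1)) Filter.atTop Filter.atTop)
      simpa [sub_eq_add_neg] using Filter.tendsto_atTop_add_const_right _ (-E) this
    apply Filter.tendsto_atTop_mono' _ _ hbase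
    filter_upwards [Filter.eventually_ge_atTop (0:ℝ)] with p hp
    have hu : (0:ℝ) < E + p := by linarith
    have : 0 ≤ M^2/(E+p) := by positivity
    have h2 : 0 ≤ D * Real.sqrt (1 - M^2/(E+p)^2) := by positivity
    show p/(γ-1) - E ≤ _
    simp only [Φ]
    linarith
  · -- existence and uniqueness
    have hΦ0 : Φ 0 < 0 := by
      have ht : Real.sqrt (1 - M^2/(E+0)^2) = Real.sqrt (E^2 - M^2) / E := by
        rw [add_zero, show (1 - M^2/E^2) = (E^2-M^2)/E^2 by field_simp,
          Real.sqrt_div (by nlinarith), Real.sqrt_sq hE0.le]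
      set t := Real.sqrt (E^2 - M^2) with hdt
      have htsq : t^2 = E^2 - M^2 := Real.sq_sqrt (by nlinarith)
      have hDt : D < t := (Real.lt_sqrt hD.le).mpr (by nlinarith)
      have ht0 : 0 < t := lt_of_le_of_lt hD.le hDt
      show 0/(γ-1) - E + M^2/(E+0) + D * Real.sqrt (1 - M^2/(E+0)^2) < 0
      rw [ht, add_zero, zero_div]
      have hlt : M^2/E + D * (t/E) < E := by
        have h : (M^2 + D*t)/E < E := by rw [div_lt_iff₀ hE0]; nlinarith
        calc M^2/E + D * (t/E) = (M^2 + D*t)/E := by ring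
          _ < E := h
      linarith
    have htend : Filter.Tendsto Φ Filter.atTop Filter.atTop := by
      have hbase : Filter.Tendsto (fun p : ℝ => p/(γ-1) - E) Filter.atTop Filter.atTop := by
        have := (Filter.tendsto_id.atTop_div_const hγ : Filter.Tendsto (fun p : ℝ => p/(γ-1)) Filter.atTop Filter.atTop)
        simpa [sub_eq_add_neg] using Filter.tendsto_atTop_add_const_right _ (-E) this
      apply Filter.tendsto_atTop_mono' _ _ hbase
      filter_upwards [Filter.eventually_ge_atTop (0:ℝ)] with p hp
      have hu : (0:ℝ) < E + p := by linarith
      have : 0 ≤ M^2/(E+p) := by positivity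
      have h2 : 0 ≤ D * Real.sqrt (1 - M^2/(E+p)^2) := by positivity
      show p/(γ-1) - E ≤ _
      simp only [Φ]
      linarith
    obtain ⟨b, hb1, hb0⟩ := ((htend.eventually_ge_atTop 1).and (Filter.eventually_ge_atTop (0:ℝ))).exists
    have hcont : ContinuousOn Φ (Set.Icc 0 b) := fun p hp =>
      ((hderiv p hp.1).continuousAt).continuousWithinAt
    have hmem : (0:ℝ) ∈ Set.Icc (Φ 0) (Φ b) := ⟨hΦ0.le, by linarith⟩
    obtain ⟨p, hpI, hpΦ⟩ := intermediate_value_Icc hb0 hcont hmem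
    have hp0 : 0 < p := by
      rcases lt_or_eq_of_le hpI.1 with h | h
      · exact h
      · exfalso; rw [← h] at hpΦ; linarith
    refine ⟨p, ⟨hp0, hpΦ⟩, ?_⟩
    rintro q ⟨hq0, hqΦ⟩
    exact hmono.injOn (Set.mem_Ici.mpr hq0.le) (Set.mem_Ici.mpr hp0.le) (by rw [hqΦ, hpΦ])
end

section
/- The quartic polynomial φ(p) = c0 + c1·p + c2·p^2 + c3·p^3 + p^4 (with the coefficients c_i arising from the RHD pressure equation) satisfies φ(0) > 0, φ(p_b^u) < 0, and φ(p) → +∞ as p → +∞; hence φ has at least two distinct positive roots, one in (0, p_b^u) and one in (p_b^u, +∞), where p_b^u = (E(γ-2) + sqrt(E^2(2-γ)^2 - 4(γ-1)(|m|^2 - E^2)))/2. -/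
private lemma quartic_tendsto (a b c d : ℝ) :
    Filter.Tendsto (fun p : ℝ => a + b*p + c*p^2 + d*p^3 + p^4)
      Filter.atTop Filter.atTop := by
  apply Filter.tendsto_atTop_mono' Filter.atTop _ Filter.tendsto_id
  filter_upwards [Filter.eventually_ge_atTop (1 + |a| + |b| + |c| + |d|)]
    with p hp
  simp only [id]
  have ha0 : -|a| ≤ a := neg_abs_le _
  have ha1 : -|b| ≤ b := neg_abs_le _
  have ha2 : -|c| ≤ c := neg_abs_le _
  have ha3 : -|d| ≤ d := neg_abs_le _
  have hb0 : 0 ≤ |a| := abs_nonneg _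
  have hb1 : 0 ≤ |b| := abs_nonneg _
  have hb2 : 0 ≤ |c| := abs_nonneg _
  have hb3 : 0 ≤ |d| := abs_nonneg _
  have hp1 : (1:ℝ) ≤ p := by linarith
  have hcube : p^2 ≤ p^3 := by nlinarith
  have hsq : p ≤ p^2 := by nlinarith
  have hone : 1 ≤ p^3 := by nlinarith
  nlinarith [mul_nonneg hb2 (by linarith : (0:ℝ) ≤ p^3 - p^2),
    mul_nonneg hb1 (by linarith : (0:ℝ) ≤ p^3 - p),
    mul_nonneg hb0 (by linarith : (0:ℝ) ≤ p^3 - 1),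
    mul_nonneg (by nlinarith : (0:ℝ) ≤ p^3)
      (by linarith : (0:ℝ) ≤ p - (1 + |a| + |b| + |c| + |d|))]

theorem stmt3 (D M E γ : ℝ) (hM : 0 ≤ M) (hD : 0 < D)
    (hE : Real.sqrt (D^2 + M^2) < E) (hγ1 : 1 < γ) (hγ2 : γ ≤ 2) :
    let c0 : ℝ := (M^2 - E^2) * (M^2 - E^2 + D^2) * (γ-1)^2
    let c1 : ℝ := 2*E*(2-γ)*(M^2 - E^2)*(γ-1) - 2*E*D^2*(γ-1)^2
    let c2 : ℝ := E^2*(γ^2 - 6*γ + 6) + 2*M^2*(γ-1) - D^2*(γ-1)^2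
    let c3 : ℝ := 2*E*(2-γ)
    let φ : ℝ → ℝ := fun p => c0 + c1*p + c2*p^2 + c3*p^3 + p^4
    let pbu : ℝ := (E*(γ-2) + Real.sqrt (E^2*(2-γ)^2 - 4*(γ-1)*(M^2 - E^2)))/2
    0 < φ 0 ∧ φ pbu < 0 ∧
    Filter.Tendsto φ Filter.atTop Filter.atTop ∧
    (∃ p1 ∈ Set.Ioo 0 pbu, φ p1 = 0) ∧
    (∃ p2 ∈ Set.Ioi pbu, φ p2 = 0) := by
  intro c0 c1 c2 c3 φ pbu
  have hE0 : 0 < E := lt_of_le_of_lt (Real.sqrt_nonneg _) hE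
  have hDM : D^2 + M^2 < E^2 := by
    nlinarith [Real.sq_sqrt (by positivity : (0:ℝ) ≤ D^2 + M^2),
      Real.sqrt_nonneg (D^2 + M^2)]
  have hME : M^2 < E^2 := by nlinarith
  have hγ0 : 0 < γ - 1 := by linarith
  have hΔ : 0 < E^2*(2-γ)^2 - 4*(γ-1)*(M^2 - E^2) := by
    nlinarith [sq_nonneg (E*(2-γ))]
  set s : ℝ := Real.sqrt (E^2*(2-γ)^2 - 4*(γ-1)*(M^2 - E^2)) with hsdef
  have hs : s^2 = E^2*(2-γ)^2 - 4*(γ-1)*(M^2 - E^2) := Real.sq_sqrt hΔ.le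
  have hsnn : 0 ≤ s := Real.sqrt_nonneg _
  have hpbu : pbu = (E*(γ-2) + s)/2 := rfl
  have hpbu_pos : 0 < pbu := by
    rw [hpbu]
    have h1 : E*(2-γ) < s := by
      nlinarith [mul_nonneg hE0.le (by linarith : (0:ℝ) ≤ 2-γ)]
    linarith
  -- pbu is a root of the quadratic q(p) = p² + E(2-γ)p + (γ-1)(M²-E²)
  have hq : pbu^2 + E*(2-γ)*pbu + (γ-1)*(M^2-E^2) = 0 := by
    rw [hpbu]; linear_combination hs/4
  -- φ(0) > 0
  have hφ0 : 0 < φ 0 := by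
    simp only [φ, c0, c1, c2, c3]
    have h1 : 0 < (E^2 - M^2) * (E^2 - M^2 - D^2) :=
      mul_pos (by linarith) (by linarith)
    nlinarith [mul_pos h1 (pow_pos hγ0 2)]
  -- φ(pbu) < 0
  have hφpbu : φ pbu = -(D^2*(γ-1)^2*((E+pbu)^2 - M^2)) := by
    simp only [φ, c0, c1, c2, c3]
    linear_combination (pbu^2 + E*(2-γ)*pbu + (γ-1)*(M^2-E^2)) * hq
  have hφneg : φ pbu < 0 := by
    rw [hφpbu]
    have hM2 : M^2 < (E + pbu)^2 := by nlinarith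
    have : 0 < D^2*(γ-1)^2*((E+pbu)^2 - M^2) := by
      apply mul_pos (mul_pos (pow_pos hD 2) (pow_pos hγ0 2)); linarith
    linarith
  -- Tendsto atTop
  have htop : Filter.Tendsto φ Filter.atTop Filter.atTop :=
    quartic_tendsto c0 c1 c2 c3
  have hc : Continuous φ := by
    simp only [φ]; fun_prop
  -- root in (0, pbu)
  have hroot1 : ∃ p1 ∈ Set.Ioo 0 pbu, φ p1 = 0 := by
    have := intermediate_value_Ioo' hpbu_pos.le hc.continuousOn
      (Set.mem_Ioo.mpr ⟨hφneg, hφ0⟩)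
    obtain ⟨p1, hmem, heq⟩ := this
    exact ⟨p1, hmem, heq⟩
  -- root in (pbu, ∞)
  have hroot2 : ∃ p2 ∈ Set.Ioi pbu, φ p2 = 0 := by
    obtain ⟨p3, hp3a, hp3b⟩ :=
      ((htop.eventually_gt_atTop 0).and (Filter.eventually_gt_atTop pbu)).exists
    have := intermediate_value_Ioo hp3b.le hc.continuousOn
      (Set.mem_Ioo.mpr ⟨hφneg, hp3a⟩)
    obtain ⟨p2, hmem, heq⟩ := this
    exact ⟨p2, hmem.1, heq⟩
  exact ⟨hφ0, hφneg, htop, hroot1, hroot2⟩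
end

section
/- If the quartic polynomial φ(p) has four real roots (counted with multiplicity), then two of them are negative. -/
theorem stmt4 (D M E γ : ℝ) (hM : 0 ≤ M) (hD : 0 < D)
    (hE : Real.sqrt (D^2 + M^2) < E) (hγ1 : 1 < γ) (hγ2 : γ ≤ 2)
    (r1 r2 r3 r4 : ℝ) (h12 : r1 ≤ r2) (h23 : r2 ≤ r3) (h34 : r3 ≤ r4)
    (hfac : ∀ p : ℝ,
      (M^2 - E^2) * (M^2 - E^2 + D^2) * (γ-1)^2
        + (2*E*(2-γ)*(M^2 - E^2)*(γ-1) - 2*E*D^2*(γ-1)^2) * p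
        + (E^2*(γ^2 - 6*γ + 6) + 2*M^2*(γ-1) - D^2*(γ-1)^2) * p^2
        + (2*E*(2-γ)) * p^3 + p^4
      = (p - r1) * (p - r2) * (p - r3) * (p - r4)) :
    r1 < 0 ∧ r2 < 0 := by
  have hE0 : 0 < E := lt_of_le_of_lt (Real.sqrt_nonneg _) hE
  have hE2 : D^2 + M^2 < E^2 := by
    have := (Real.sqrt_lt' hE0).mp hE
    linarith
  -- constant coefficient positive
  have h1 : M^2 - E^2 + D^2 < 0 := by linarith
  have h2 : M^2 - E^2 < 0 := by nlinarith [sq_nonneg D]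
  have hg : 0 < (γ-1)^2 := pow_pos (by linarith) 2
  have hc0 : 0 < (M^2 - E^2) * (M^2 - E^2 + D^2) * (γ-1)^2 :=
    mul_pos (mul_pos_of_neg_of_neg h2 h1) hg
  -- product of roots equals constant coefficient
  have hprod : 0 < r1 * r2 * r3 * r4 := by
    have h0 := hfac 0
    nlinarith [hc0]
  -- sum of roots
  have hsum : r1 + r2 + r3 + r4 = -(2*E*(2-γ)) := by
    have e1 := hfac 1
    have em1 := hfac (-1)
    have e2 := hfac 2
    have em2 := hfac (-2)
    linarith [e1, em1, e2, em2]
  have hsum0 : r1 + r2 + r3 + r4 ≤ 0 := by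
    have : 0 ≤ 2*E*(2-γ) := by
      have : 0 ≤ 2 - γ := by linarith
      positivity
    linarith
  have hr1 : r1 < 0 := by
    by_contra h
    push_neg at h
    have hr1ne : r1 ≠ 0 := by
      intro h0
      rw [h0] at hprod
      simp at hprod
    have hr1pos : 0 < r1 := lt_of_le_of_ne h (Ne.symm hr1ne)
    have : 0 < r1 + r2 + r3 + r4 := by linarith
    linarith
  refine ⟨hr1, ?_⟩
  by_contra h
  push_neg at h
  have h3 : (0:ℝ) ≤ r3 := le_trans h h23
  have h4 : (0:ℝ) ≤ r4 := le_trans h3 h34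
  have hx : 0 ≤ r2 * r3 * r4 := mul_nonneg (mul_nonneg h h3) h4
  nlinarith [mul_nonpos_of_nonpos_of_nonneg (le_of_lt hr1) hx]
end

section
/- The smallest positive root of the quartic polynomial φ(p) is the unique positive root of Φ(p) = 0, i.e., it equals the physical pressure p(U). Equivalently, if p_a^u denotes the larger of the two positive roots of φ, then Φ(p_a^u) > 0. -/
theorem stmt5 (D M E γ : ℝ) (hM : 0 ≤ M) (hD : 0 < D)
    (hE : Real.sqrt (D^2 + M^2) < E) (hγ1 : 1 < γ) (hγ2 : γ ≤ 2)
    (Φ h3 φ : ℝ → ℝ)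
    (hΦ : ∀ p, Φ p = p/(γ-1) - E + M^2/(E+p) + D * Real.sqrt (1 - M^2/(E+p)^2))
    (hh3 : ∀ p, h3 p = M^2 + (E+p) * (p/(γ-1) - E))
    (hφ : ∀ p, φ p = (γ-1)^2 * ((h3 p)^2 - D^2*((E+p)^2 - M^2)))
    (pbu ps pa : ℝ)
    (hpbu : 0 < pbu ∧ h3 pbu = 0 ∧ ∀ p, 0 < p → h3 p = 0 → p = pbu)
    (hps : ps ∈ Set.Ioo 0 pbu ∧ φ ps = 0)
    (hpa : pa ∈ Set.Ioi pbu ∧ φ pa = 0)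
    (honly : ∀ p, 0 < p → φ p = 0 → p = ps ∨ p = pa) :
    Φ ps = 0 ∧ 0 < Φ pa := by
  obtain ⟨hpbu0, hpbu3, _⟩ := hpbu
  obtain ⟨⟨hps0, hpsb⟩, hpsφ⟩ := hps
  obtain ⟨hpab, hpaφ⟩ := hpa
  have hpab' : pbu < pa := hpab
  have hγ : 0 < γ - 1 := by linarith
  have hs0 := Real.sqrt_nonneg (D^2+M^2)
  have hsq := Real.sq_sqrt (show (0:ℝ) ≤ D^2+M^2 by positivity)
  have hE2 : D^2 + M^2 < E^2 := by nlinarith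
  have hEpos : 0 < E := lt_of_le_of_lt hs0 hE
  have hEM : M < E := by nlinarith
  -- strict monotonicity of h3 on [0, ∞)
  have hmono : ∀ p q : ℝ, 0 ≤ p → p < q → h3 p < h3 q := by
    intro p q hp hpq
    rw [hh3, hh3]
    have key : (E+q)*(q/(γ-1)-E) - (E+p)*(p/(γ-1)-E)
        = (q-p)*((2-γ)*E+p+q)/(γ-1) := by field_simp; ring
    have hpos : 0 < (q-p)*((2-γ)*E+p+q)/(γ-1) := by
      apply div_pos _ hγ
      have h1 : 0 < (2-γ)*E+p+q := by nlinarith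
      nlinarith
    linarith
  have hsneg : h3 ps < 0 := by
    have := hmono ps pbu hps0.le hpsb; linarith
  have hapos : 0 < h3 pa := by
    have := hmono pbu pa hpbu0.le hpab'; linarith
  -- the key formula for Φ
  have hΦform : ∀ p, 0 < p → Φ p * (E+p) = h3 p + D * Real.sqrt ((E+p)^2 - M^2) := by
    intro p hp
    have hEp : 0 < E + p := by linarith
    have hX : (0:ℝ) ≤ (E+p)^2 - M^2 := by nlinarith
    rw [hΦ, hh3]
    have h1 : Real.sqrt (1 - M^2/(E+p)^2) = Real.sqrt ((E+p)^2 - M^2) / (E+p) := by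
      rw [show 1 - M^2/(E+p)^2 = ((E+p)^2 - M^2)/(E+p)^2 by field_simp]
      rw [Real.sqrt_div hX, Real.sqrt_sq hEp.le]
    rw [h1]
    field_simp
    ring
  -- φ p = 0 implies D * sqrt ((E+p)^2 - M^2) = |h3 p|
  have habs : ∀ p, 0 < p → φ p = 0 → D * Real.sqrt ((E+p)^2 - M^2) = |h3 p| := by
    intro p hp hφp
    rw [hφ] at hφp
    have hne : ((γ-1)^2 : ℝ) ≠ 0 := by positivity
    have h2 : (h3 p)^2 = D^2 * ((E+p)^2 - M^2) := by
      rcases mul_eq_zero.mp hφp with h | h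
      · exact absurd h hne
      · linarith
    have hX : (0:ℝ) ≤ (E+p)^2 - M^2 := by nlinarith
    calc D * Real.sqrt ((E+p)^2 - M^2)
        = Real.sqrt (D^2) * Real.sqrt ((E+p)^2 - M^2) := by
          rw [Real.sqrt_sq hD.le]
      _ = Real.sqrt (D^2 * ((E+p)^2 - M^2)) := by
          rw [Real.sqrt_mul (by positivity)]
      _ = Real.sqrt ((h3 p)^2) := by rw [h2]
      _ = |h3 p| := Real.sqrt_sq_eq_abs _
  have hpa0 : 0 < pa := lt_trans hpbu0 hpab'
  have hfs := hΦform ps hps0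
  have hfa := hΦform pa hpa0
  rw [habs ps hps0 hpsφ, abs_of_neg hsneg] at hfs
  rw [habs pa hpa0 hpaφ, abs_of_pos hapos] at hfa
  have hEps : 0 < E + ps := by linarith
  have hEpa : 0 < E + pa := by linarith
  constructor
  · have : Φ ps * (E + ps) = 0 := by linarith
    rcases mul_eq_zero.mp this with h | h
    · exact h
    · linarith
  · by_contra hc
    push_neg at hc
    have h1 : Φ pa * (E + pa) ≤ 0 :=
      mul_nonpos_of_nonpos_of_nonneg hc hEpa.le
    linarith
end

section
/- If φ''(0) = 2c2 > 0, then φ''(p) > 0 and φ'(p) < 0 for all p in [0, p(U)), where p(U) is the smallest positive root of the quartic φ. -/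
private lemma stmt8_aux (c0 c1 c2 c3 : ℝ) (hc0 : 0 < c0) (hc2 : 0 < c2) (hc3 : 0 ≤ c3)
    (φ : ℝ → ℝ) (hφ : ∀ p, φ p = c0 + c1*p + c2*p^2 + c3*p^3 + p^4)
    (pU : ℝ) (hroot : φ pU = 0)
    (hsmall : ∀ p, 0 < p → φ p = 0 → pU ≤ p)
    (p : ℝ) (hp0 : 0 ≤ p) (hppU : p < pU) :
    c1 + 2*c2*p + 3*c3*p^2 + 4*p^3 < 0 := by
  have hφderiv : ∀ x : ℝ, HasDerivAt φ (c1 + 2*c2*x + 3*c3*x^2 + 4*x^3) x := by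
    intro x
    have hφeq : φ = fun y => c0 + c1*y + c2*y^2 + c3*y^3 + y^4 := funext hφ
    rw [hφeq]
    have h : HasDerivAt (fun y : ℝ => c0 + c1*y + c2*y^2 + c3*y^3 + y^4)
        (0 + c1*1 + c2*(2*x^1) + c3*(3*x^2) + 4*x^3) x :=
      ((((hasDerivAt_const x c0).add ((hasDerivAt_id x).const_mul c1)).add
        ((hasDerivAt_pow 2 x).const_mul c2)).add
        ((hasDerivAt_pow 3 x).const_mul c3)).add (by simpa using hasDerivAt_pow 4 x)
    convert h using 1
    ring
  have hφcont : Continuous φ :=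
    continuous_iff_continuousAt.mpr fun x => (hφderiv x).differentiableAt.continuousAt
  by_contra hcon
  push_neg at hcon
  have hgpos : ∀ x, p < x → 0 < c1 + 2*c2*x + 3*c3*x^2 + 4*x^3 := by
    intro x hxp
    have hx0 : 0 ≤ x := le_trans hp0 hxp.le
    have hbr : 0 < 2*c2 + 3*c3*(x+p) + 4*(x^2 + x*p + p^2) := by
      nlinarith [mul_nonneg hc3 (add_nonneg hx0 hp0), mul_nonneg hx0 hp0,
        sq_nonneg x, sq_nonneg p]
    nlinarith [mul_pos (sub_pos.mpr hxp) hbr]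
  have hmono : StrictMonoOn φ (Set.Icc p pU) := by
    apply strictMonoOn_of_deriv_pos (convex_Icc p pU) hφcont.continuousOn
    intro x hx
    rw [interior_Icc] at hx
    rw [(hφderiv x).deriv]
    exact hgpos x hx.1
  have hφp_pos : 0 < φ p := by
    rcases eq_or_lt_of_le hp0 with h | h
    · rw [← h, hφ]; simpa using hc0
    · by_contra hle
      push_neg at hle
      have h0 : φ 0 = c0 := by rw [hφ]; ring
      have hmem : (0:ℝ) ∈ Set.Icc (φ p) (φ 0) := by
        constructor
        · exact hle
        · rw [h0]; exact hc0.le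
      obtain ⟨r, hr, hfr⟩ := intermediate_value_Icc' h.le hφcont.continuousOn hmem
      have hr0 : 0 < r := by
        rcases eq_or_lt_of_le hr.1 with h' | h'
        · exfalso; rw [← h', h0] at hfr; linarith
        · exact h'
      have := hsmall r hr0 hfr
      linarith [hr.2]
  have hlt : φ p < φ pU :=
    hmono (Set.left_mem_Icc.mpr hppU.le) (Set.right_mem_Icc.mpr hppU.le) hppU
  rw [hroot] at hlt
  linarith

theorem stmt8 (D M E γ : ℝ) (hM : 0 ≤ M) (hD : 0 < D)
    (hE : Real.sqrt (D^2 + M^2) < E) (hγ1 : 1 < γ) (hγ2 : γ ≤ 2)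
    (c0 c1 c2 c3 : ℝ)
    (hc0 : c0 = (M^2 - E^2) * (M^2 - E^2 + D^2) * (γ-1)^2)
    (hc1 : c1 = 2*E*(2-γ)*(M^2 - E^2)*(γ-1) - 2*E*D^2*(γ-1)^2)
    (hc2 : c2 = E^2*(γ^2 - 6*γ + 6) + 2*M^2*(γ-1) - D^2*(γ-1)^2)
    (hc3 : c3 = 2*E*(2-γ))
    (φ : ℝ → ℝ) (hφ : ∀ p, φ p = c0 + c1*p + c2*p^2 + c3*p^3 + p^4)
    (pU : ℝ) (hpU : 0 < pU) (hroot : φ pU = 0)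
    (hsmall : ∀ p, 0 < p → φ p = 0 → pU ≤ p)
    (hc2pos : 0 < c2) :
    ∀ p, 0 ≤ p → p < pU →
      0 < 12*p^2 + 6*c3*p + 2*c2 ∧ c1 + 2*c2*p + 3*c3*p^2 + 4*p^3 < 0 := by
  have hE0 : 0 < E := lt_of_le_of_lt (Real.sqrt_nonneg _) hE
  have hE2 : D^2 + M^2 < E^2 := by
    nlinarith [Real.sq_sqrt (by positivity : (0:ℝ) ≤ D^2 + M^2),
      Real.sqrt_nonneg (D^2 + M^2)]
  have hc3nn : 0 ≤ c3 := by rw [hc3]; nlinarith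
  have hv : 0 < E^2 - M^2 := by nlinarith
  have hu : 0 < E^2 - M^2 - D^2 := by nlinarith
  have hγsq : 0 < (γ - 1)^2 := by nlinarith
  have hc0pos : 0 < c0 := by
    rw [hc0]; nlinarith [mul_pos (mul_pos hv hu) hγsq]
  intro p hp0 hppU
  constructor
  · have h1 : 0 ≤ 12*p^2 := by positivity
    have h2 : 0 ≤ 6*c3*p := mul_nonneg (mul_nonneg (by norm_num) hc3nn) hp0
    linarith
  · exact stmt8_aux c0 c1 c2 c3 hc0pos hc2pos hc3nn φ hφ pU hroot hsmall p hp0 hppU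
end

section
/- If φ''(0) = 2c2 ≤ 0, then the largest root p_e = (-3c3 + sqrt(9c3^2 - 24c2))/12 of the quadratic φ''(p) = 12p^2 + 6c3 p + 2c2 is nonnegative. Moreover: (i) if 0 ≤ p_e < p(U), then φ''(p) ≥ 0 and φ'(p) < 0 for all p ∈ [p_e, p(U)); (ii) if p_e > p(U), then φ''(p) ≤ 0 and φ'(p) < 0 for all p ∈ (p(U), p_e]. -/
set_option maxHeartbeats 1000000 in
theorem stmt9 (D M E γ : ℝ) (hM : 0 ≤ M) (hD : 0 < D)
    (hE : Real.sqrt (D^2 + M^2) < E) (hγ1 : 1 < γ) (hγ2 : γ ≤ 2)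
    (c0 c1 c2 c3 : ℝ)
    (hc0 : c0 = (M^2 - E^2) * (M^2 - E^2 + D^2) * (γ-1)^2)
    (hc1 : c1 = 2*E*(2-γ)*(M^2 - E^2)*(γ-1) - 2*E*D^2*(γ-1)^2)
    (hc2 : c2 = E^2*(γ^2 - 6*γ + 6) + 2*M^2*(γ-1) - D^2*(γ-1)^2)
    (hc3 : c3 = 2*E*(2-γ))
    (φ : ℝ → ℝ) (hφ : ∀ p, φ p = c0 + c1*p + c2*p^2 + c3*p^3 + p^4)
    (pU : ℝ) (hpU : 0 < pU) (hroot : φ pU = 0)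
    (hsmall : ∀ p, 0 < p → φ p = 0 → pU ≤ p)
    (hc2neg : c2 ≤ 0)
    (pe : ℝ) (hpe : pe = (-3*c3 + Real.sqrt (9*c3^2 - 24*c2))/12) :
    0 ≤ pe ∧
    (pe < pU → ∀ p, pe ≤ p → p < pU →
      0 ≤ 12*p^2 + 6*c3*p + 2*c2 ∧ c1 + 2*c2*p + 3*c3*p^2 + 4*p^3 < 0) ∧
    (pU < pe → ∀ p, pU < p → p ≤ pe →
      12*p^2 + 6*c3*p + 2*c2 ≤ 0 ∧ c1 + 2*c2*p + 3*c3*p^2 + 4*p^3 < 0) := by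
  have hE0 : 0 < E := lt_of_le_of_lt (Real.sqrt_nonneg _) hE
  have hE2 : D^2 + M^2 < E^2 := by
    have := (Real.sqrt_lt' hE0).mp hE
    linarith
  have hg : 0 < (γ-1)^2 := pow_pos (by linarith) 2
  have h1 : 0 < E^2 - M^2 := by nlinarith
  have h2 : 0 < E^2 - M^2 - D^2 := by linarith
  have hc0pos : 0 < c0 := by
    rw [hc0]; nlinarith [mul_pos (mul_pos h1 h2) hg]
  have hc3nn : 0 ≤ c3 := by
    rw [hc3]
    have : (0:ℝ) ≤ 2-γ := by linarith
    positivity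
  have ht1 : 2*E*(2-γ)*(M^2-E^2)*(γ-1) ≤ 0 := by
    have h := mul_nonneg (mul_nonneg (mul_nonneg
      (by linarith : (0:ℝ) ≤ 2*E) (by linarith : (0:ℝ) ≤ 2-γ)) h1.le)
      (by linarith : (0:ℝ) ≤ γ-1)
    nlinarith [h]
  have ht2 : 0 < 2*E*D^2*(γ-1)^2 :=
    mul_pos (mul_pos (by linarith) (pow_pos hD 2)) hg
  have hc1neg : c1 < 0 := by rw [hc1]; linarith
  set s := Real.sqrt (9*c3^2 - 24*c2) with hs
  have hdisc : 0 ≤ 9*c3^2 - 24*c2 := by nlinarith [sq_nonneg c3]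
  have hs0 : 0 ≤ s := Real.sqrt_nonneg _
  have hs2 : s^2 = 9*c3^2 - 24*c2 := Real.sq_sqrt hdisc
  have hsge : 3*c3 ≤ s := by
    have h1 : Real.sqrt ((3*c3)^2) ≤ s := Real.sqrt_le_sqrt (by nlinarith)
    rwa [Real.sqrt_sq (by linarith : (0:ℝ) ≤ 3*c3)] at h1
  have hpe0 : 0 ≤ pe := by rw [hpe]; linarith
  have hquad : ∀ p : ℝ, 12*p^2 + 6*c3*p + 2*c2
      = 12*(p - pe)*(p - (-3*c3 - s)/12) := by
    intro p
    rw [hpe]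
    linear_combination hs2/12
  have hb : (-3*c3 - s)/12 ≤ 0 := by
    have : -3*c3 - s ≤ 0 := by linarith
    linarith
  have hqpos : ∀ p, pe ≤ p → 0 ≤ 12*p^2 + 6*c3*p + 2*c2 := by
    intro p hp
    rw [hquad]
    have h1 : (0:ℝ) ≤ 12*(p - pe) := by linarith
    have h2 : (0:ℝ) ≤ p - (-3*c3 - s)/12 := by linarith
    exact mul_nonneg h1 h2
  have hqneg : ∀ p, 0 ≤ p → p ≤ pe → 12*p^2 + 6*c3*p + 2*c2 ≤ 0 := by
    intro p hp0 hp
    rw [hquad]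
    have h1 : 12*(p - pe) ≤ 0 := by linarith
    have h2 : (0:ℝ) ≤ p - (-3*c3 - s)/12 := by linarith
    exact mul_nonpos_of_nonpos_of_nonneg h1 h2
  -- derivative facts
  set F : ℝ → ℝ := fun p => c0 + c1*p + c2*p^2 + c3*p^3 + p^4 with hF
  set G : ℝ → ℝ := fun p => c1 + 2*c2*p + 3*c3*p^2 + 4*p^3 with hG
  have hF' : ∀ x : ℝ, HasDerivAt F (G x) x := by
    intro x
    have h : HasDerivAt (fun p : ℝ => c0 + c1*p + c2*p^2 + c3*p^3 + p^4)
        (0 + c1*1 + c2*(2*x^1) + c3*(3*x^2) + 4*x^3) x := by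
      exact ((((hasDerivAt_const x c0).add ((hasDerivAt_id x).const_mul c1)).add
        ((hasDerivAt_pow 2 x).const_mul c2)).add
        ((hasDerivAt_pow 3 x).const_mul c3)).add
        (by simpa using hasDerivAt_pow 4 x)
    convert h using 1
    simp [hG]; ring
  have hG' : ∀ x : ℝ, HasDerivAt G (2*c2 + 6*c3*x + 12*x^2) x := by
    intro x
    have h : HasDerivAt (fun p : ℝ => c1 + 2*c2*p + 3*c3*p^2 + 4*p^3)
        (0 + 2*c2*1 + 3*c3*(2*x^1) + 4*(3*x^2)) x := by
      exact (((hasDerivAt_const x c1).add ((hasDerivAt_id x).const_mul (2*c2))).add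
        ((hasDerivAt_pow 2 x).const_mul (3*c3))).add
        ((hasDerivAt_pow 3 x).const_mul 4)
    convert h using 1
    ring
  have hFc : Continuous F := by
    have : Differentiable ℝ F := fun x => (hF' x).differentiableAt
    exact this.continuous
  have hGdiff : Differentiable ℝ G := fun x => (hG' x).differentiableAt
  have hGderiv : ∀ x, deriv G x = 2*c2 + 6*c3*x + 12*x^2 := fun x => (hG' x).deriv
  have hFderiv : ∀ x, deriv F x = G x := fun x => (hF' x).deriv
  have hFroot : F pU = 0 := by rw [← hroot, hφ]
  have hFpos : ∀ p, 0 < p → p < pU → 0 < F p := by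
    intro p hp0 hplt
    by_contra h
    push_neg at h
    rcases lt_or_eq_of_le h with hlt | heq
    · have hmem : (0:ℝ) ∈ Set.Icc (F p) (F 0) := by
        constructor
        · linarith
        · simp only [hF]; norm_num; linarith
      obtain ⟨q, hq, hq0⟩ := intermediate_value_Icc' hp0.le hFc.continuousOn hmem
      have hqpos' : 0 < q := by
        rcases lt_or_eq_of_le hq.1 with h' | h'
        · exact h'
        · exfalso
          have : F 0 = 0 := by rw [← h'] at hq0; exact hq0
          simp only [hF] at this; norm_num at this; linarith
      have := hsmall q hqpos' (by rw [hφ]; exact hq0)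
      linarith [hq.2]
    · have := hsmall p hp0 (by rw [hφ]; exact heq)
      linarith
  refine ⟨hpe0, ?_, ?_⟩
  · -- case (i): pe < pU
    intro hlt p hp1 hp2
    refine ⟨hqpos p hp1, ?_⟩
    by_contra h
    push_neg at h
    have hp0 : 0 < p := by
      rcases lt_or_eq_of_le (le_trans hpe0 hp1) with h' | h'
      · exact h'
      · exfalso
        rw [← h'] at h
        norm_num at h
        linarith
    -- G is monotone on [p, pU]
    have hGmono : MonotoneOn G (Set.Icc p pU) := by
      apply monotoneOn_of_deriv_nonneg (convex_Icc p pU) hGdiff.continuous.continuousOn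
        hGdiff.differentiableOn
      intro x hx
      rw [interior_Icc] at hx
      rw [hGderiv]
      linarith [hqpos x (by linarith [hx.1] : pe ≤ x)]
    have hFmono : MonotoneOn F (Set.Icc p pU) := by
      apply monotoneOn_of_deriv_nonneg (convex_Icc p pU) hFc.continuousOn
        (fun x _ => (hF' x).differentiableAt.differentiableWithinAt)
      intro x hx
      rw [interior_Icc] at hx
      rw [hFderiv]
      have hGle : G p ≤ G x := hGmono (Set.left_mem_Icc.2 (by linarith [hx.1, hx.2]))
        ⟨hx.1.le, hx.2.le⟩ hx.1.le
      have hGp : G p = c1 + 2*c2*p + 3*c3*p^2 + 4*p^3 := rfl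
      linarith
    have h3 : F p ≤ F pU := hFmono (Set.left_mem_Icc.2 hp2.le)
      (Set.right_mem_Icc.2 hp2.le) hp2.le
    have := hFpos p hp0 hp2
    linarith [hFroot]
  · -- case (ii): pU < pe
    intro hlt p hp1 hp2
    have hp0 : 0 < p := lt_trans hpU hp1
    refine ⟨hqneg p hp0.le hp2, ?_⟩
    have hGanti : AntitoneOn G (Set.Icc 0 pe) := by
      apply antitoneOn_of_deriv_nonpos (convex_Icc 0 pe) hGdiff.continuous.continuousOn
        hGdiff.differentiableOn
      intro x hx
      rw [interior_Icc] at hx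
      rw [hGderiv]
      linarith [hqneg x hx.1.le hx.2.le]
    have h3 : G p ≤ G 0 := hGanti (Set.left_mem_Icc.2 hpe0) ⟨hp0.le, hp2⟩ hp0.le
    have h4 : G 0 = c1 := by simp [hG]
    have : G p < 0 := by rw [h4] at h3; linarith
    simpa [hG] using this
end

section
/- The Newton–Raphson iteration p_{n+1} = p_n - φ(p_n)/φ'(p_n), with initial value p0 = 0 if c2 > 0 and p0 = (-3c3 + sqrt(9c3^2 - 24c2))/12 otherwise, generates a sequence converging monotonically to the physical pressure p(U); in particular all iterates p_n with n ≥ 1 are positive. -/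
open Filter Topology

lemma tangent_below (c0 c1 c2 c3 : ℝ) (φ φ' : ℝ → ℝ)
    (hφ : ∀ p, φ p = c0 + c1*p + c2*p^2 + c3*p^3 + p^4)
    (hφ' : ∀ p, φ' p = c1 + 2*c2*p + 3*c3*p^2 + 4*p^3)
    (a : ℝ) (hQ : ∀ p, a ≤ p → 0 ≤ 12*p^2 + 6*c3*p + 2*c2) :
    ∀ x y, a ≤ x → a ≤ y → φ x + φ' x * (y - x) ≤ φ y := by
  intro x y hx hy
  have hz := hQ ((2*x+y)/3) (by linarith)
  rw [hφ x, hφ y, hφ' x]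
  nlinarith [mul_nonneg (sq_nonneg (y-x)) hz, sq_nonneg ((y-x)^2)]

lemma tangent_above (c0 c1 c2 c3 x y : ℝ) (φ φ' : ℝ → ℝ)
    (hφ : ∀ p, φ p = c0 + c1*p + c2*p^2 + c3*p^3 + p^4)
    (hφ' : ∀ p, φ' p = c1 + 2*c2*p + 3*c3*p^2 + 4*p^3)
    (hqx : 12*x^2 + 6*c3*x + 2*c2 ≤ 0) (hqy : 12*y^2 + 6*c3*y + 2*c2 ≤ 0) :
    φ y ≤ φ x + φ' x * (y - x) := by
  rw [hφ x, hφ y, hφ' x]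
  nlinarith [mul_nonpos_of_nonneg_of_nonpos (sq_nonneg (y-x)) hqx,
    mul_nonpos_of_nonneg_of_nonpos (sq_nonneg (y-x)) hqy, sq_nonneg ((y-x)^2)]

lemma newton_aux (f f' : ℝ → ℝ) (hfc : Continuous f) (hf'c : Continuous f')
    (x0 r : ℝ) (hx0r : x0 ≤ r) (hfr : f r = 0)
    (htan : ∀ x y, x0 ≤ x → x ≤ r → x0 ≤ y → y ≤ r → f x + f' x * (y - x) ≤ f y)
    (hfpos : ∀ x, x0 ≤ x → x < r → 0 < f x)
    (s : ℕ → ℝ) (hs0 : s 0 = x0) (hsrec : ∀ n, s (n+1) = s n - f (s n) / f' (s n)) :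
    Monotone s ∧ Filter.Tendsto s Filter.atTop (nhds r) ∧
      (∀ n, x0 ≤ s n ∧ s n ≤ r) ∧ (x0 < r → x0 < s 1) := by
  have hder : ∀ x, x0 ≤ x → x < r → f' x < 0 := by
    intro x hx hxr
    have h := htan x r hx hxr.le hx0r le_rfl
    rw [hfr] at h
    have hfx := hfpos x hx hxr
    by_contra h0
    push_neg at h0
    nlinarith [mul_nonneg h0 (sub_nonneg.mpr hxr.le)]
  have hstep : ∀ x, x0 ≤ x → x ≤ r → x ≤ x - f x / f' x ∧ x - f x / f' x ≤ r := by
    intro x h1 h2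
    rcases eq_or_lt_of_le h2 with he | hlt
    · rw [he, hfr, zero_div, sub_zero]
      exact ⟨le_rfl, le_rfl⟩
    · have hfx := hfpos x h1 hlt
      have hd := hder x h1 hlt
      have hnd : 0 < -f' x := neg_pos.mpr hd
      have hxy : x - f x / f' x = x + f x / (-f' x) := by
        rw [div_neg]; ring
      constructor
      · rw [hxy]
        have := div_pos hfx hnd
        linarith
      · rw [hxy]
        have h := htan x r h1 h2 hx0r le_rfl
        rw [hfr] at h
        have h2' : f x / (-f' x) ≤ r - x := (div_le_iff₀ hnd).mpr (by nlinarith)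
        linarith
  have hinv : ∀ n, x0 ≤ s n ∧ s n ≤ r := by
    intro n
    induction n with
    | zero => exact ⟨hs0.ge, hs0 ▸ hx0r⟩
    | succ k ih =>
      have h := hstep (s k) ih.1 ih.2
      rw [hsrec k]
      exact ⟨ih.1.trans h.1, h.2⟩
  have hmono : Monotone s := monotone_nat_of_le_succ (fun n => by
    rw [hsrec]; exact (hstep (s n) (hinv n).1 (hinv n).2).1)
  have hbdd : BddAbove (Set.range s) := ⟨r, by rintro _ ⟨n, rfl⟩; exact (hinv n).2⟩
  have hlim : Tendsto s atTop (nhds (⨆ n, s n)) := tendsto_atTop_ciSup hmono hbdd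
  set L := ⨆ n, s n with hL
  have hLle : L ≤ r := ciSup_le fun n => (hinv n).2
  have hLge : x0 ≤ L := (hinv 0).1.trans (le_ciSup hbdd 0)
  have hLr : L = r := by
    by_contra hne
    have hLlt : L < r := lt_of_le_of_ne hLle hne
    have hfL : 0 < f L := hfpos L hLge hLlt
    have hdL : f' L < 0 := hder L hLge hLlt
    have h1 : Tendsto (fun n => s (n+1)) atTop (nhds L) :=
      hlim.comp (tendsto_add_atTop_nat 1)
    have h2 : Tendsto (fun n => s n - f (s n) / f' (s n)) atTop (nhds (L - f L / f' L)) :=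
      hlim.sub (((hfc.tendsto L).comp hlim).div ((hf'c.tendsto L).comp hlim) hdL.ne)
    have h3 : Tendsto (fun n => s (n+1)) atTop (nhds (L - f L / f' L)) :=
      h2.congr (fun n => (hsrec n).symm)
    have heq := tendsto_nhds_unique h1 h3
    have : f L / f' L = 0 := by linarith
    rcases div_eq_zero_iff.mp this with h | h
    · exact absurd h hfL.ne'
    · exact absurd h hdL.ne
  refine ⟨hmono, hLr ▸ hlim, hinv, ?_⟩
  intro hlt
  have hfx := hfpos x0 le_rfl hlt
  have hd := hder x0 le_rfl hlt
  have hnd : 0 < -f' x0 := neg_pos.mpr hd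
  have hxy : x0 - f x0 / f' x0 = x0 + f x0 / (-f' x0) := by rw [div_neg]; ring
  rw [hsrec 0, hs0, hxy]
  have := div_pos hfx hnd
  linarith

theorem stmt10 (D M E γ : ℝ) (hM : 0 ≤ M) (hD : 0 < D)
    (hE : Real.sqrt (D^2 + M^2) < E) (hγ1 : 1 < γ) (hγ2 : γ ≤ 2)
    (c0 c1 c2 c3 : ℝ)
    (hc0 : c0 = (M^2 - E^2) * (M^2 - E^2 + D^2) * (γ-1)^2)
    (hc1 : c1 = 2*E*(2-γ)*(M^2 - E^2)*(γ-1) - 2*E*D^2*(γ-1)^2)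
    (hc2 : c2 = E^2*(γ^2 - 6*γ + 6) + 2*M^2*(γ-1) - D^2*(γ-1)^2)
    (hc3 : c3 = 2*E*(2-γ))
    (φ φ' : ℝ → ℝ)
    (hφ : ∀ p, φ p = c0 + c1*p + c2*p^2 + c3*p^3 + p^4)
    (hφ' : ∀ p, φ' p = c1 + 2*c2*p + 3*c3*p^2 + 4*p^3)
    (pU : ℝ) (hpU : 0 < pU) (hroot : φ pU = 0)
    (hsmall : ∀ p, 0 < p → φ p = 0 → pU ≤ p)
    (seq : ℕ → ℝ)
    (h0 : seq 0 = if 0 < c2 then 0 else (-3*c3 + Real.sqrt (9*c3^2 - 24*c2))/12)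
    (hrec : ∀ n, seq (n+1) = seq n - φ (seq n) / φ' (seq n)) :
    (Monotone seq ∨ Antitone seq) ∧
    Filter.Tendsto seq Filter.atTop (nhds pU) ∧
    (∀ n, 1 ≤ n → 0 < seq n) := by
  have hEpos : 0 < E := lt_of_le_of_lt (Real.sqrt_nonneg _) hE
  have hq2 : Real.sqrt (D^2+M^2) ^ 2 = D^2 + M^2 := Real.sq_sqrt (by positivity)
  have hE2 : D^2 + M^2 < E^2 := by
    linarith [mul_pos (sub_pos.mpr hE)
      (show 0 < E + Real.sqrt (D^2+M^2) by linarith [Real.sqrt_nonneg (D^2+M^2)]), hq2]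
  have hA : 0 < E^2 - M^2 := by linarith [pow_pos hD 2]
  have hB : 0 < E^2 - M^2 - D^2 := by linarith
  have hg : 0 < (γ-1)^2 := pow_pos (by linarith) 2
  have hc0p : 0 < c0 := by
    rw [hc0]; linarith [mul_pos (mul_pos hA hB) hg]
  have hc1n : c1 < 0 := by
    have h1 : 0 ≤ 2*E*(2-γ) := mul_nonneg (by linarith) (by linarith)
    have h2 : 0 ≤ (E^2 - M^2)*(γ-1) := mul_nonneg hA.le (by linarith)
    have h3 := mul_nonneg h1 h2
    have h4 : 0 < 2*E*(D^2)*((γ-1)^2) :=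
      mul_pos (mul_pos (by linarith) (pow_pos hD 2)) hg
    rw [hc1]; linarith [h3, h4]
  have hc3n : 0 ≤ c3 := by
    rw [hc3]; exact mul_nonneg (by linarith) (by linarith)
  have hφc : Continuous φ := by
    have h : φ = fun p => c0 + c1*p + c2*p^2 + c3*p^3 + p^4 := funext hφ
    rw [h]; fun_prop
  have hφ'c : Continuous φ' := by
    have h : φ' = fun p => c1 + 2*c2*p + 3*c3*p^2 + 4*p^3 := funext hφ'
    rw [h]; fun_prop
  have hφ0 : φ 0 = c0 := by rw [hφ]; ring
  have hpos : ∀ p, 0 ≤ p → p < pU → 0 < φ p := by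
    intro p hp hppU
    by_contra hle
    push_neg at hle
    have hm : (0:ℝ) ∈ Set.Icc (φ p) (φ 0) := ⟨hle, by rw [hφ0]; exact hc0p.le⟩
    obtain ⟨z, hz, hz0⟩ := intermediate_value_Icc' hp hφc.continuousOn hm
    have hzpos : 0 < z := by
      rcases hz.1.lt_or_eq with h | h
      · exact h
      · exfalso; rw [← h, hφ0] at hz0; linarith
    linarith [hsmall z hzpos hz0, hz.2]
  have caseI : 0 ≤ seq 0 → seq 0 ≤ pU →
      (∀ p, seq 0 ≤ p → 0 ≤ 12*p^2 + 6*c3*p + 2*c2) →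
      (Monotone seq ∨ Antitone seq) ∧ Filter.Tendsto seq Filter.atTop (nhds pU) ∧
        (∀ n, 1 ≤ n → 0 < seq n) := by
    intro ha0 hapU hQa
    have htan := tangent_below c0 c1 c2 c3 φ φ' hφ hφ' (seq 0) hQa
    obtain ⟨hmono, hlim, hbnd, hs1⟩ := newton_aux φ φ' hφc hφ'c (seq 0) pU hapU hroot
      (fun x y hx _ hy _ => htan x y hx hy)
      (fun x hx hxr => hpos x (le_trans ha0 hx) hxr)
      seq rfl hrec
    refine ⟨Or.inl hmono, hlim, ?_⟩
    intro n hn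
    rcases eq_or_lt_of_le hapU with he | hlt
    · have h1 := (hbnd n).1
      rw [he] at h1
      exact lt_of_lt_of_le hpU h1
    · have h2 := hs1 hlt
      have h3 := hmono hn
      linarith
  by_cases hc2p : 0 < c2
  · rw [if_pos hc2p] at h0
    have ha0 : 0 ≤ seq 0 := h0.ge
    have hQa : ∀ p, seq 0 ≤ p → 0 ≤ 12*p^2 + 6*c3*p + 2*c2 := by
      intro p hp
      rw [h0] at hp
      linarith [sq_nonneg p, mul_nonneg hc3n hp]
    exact caseI ha0 (by rw [h0]; exact hpU.le) hQa
  · rw [if_neg hc2p] at h0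
    push_neg at hc2p
    set s := Real.sqrt (9*c3^2 - 24*c2) with hs
    have hs2 : s^2 = 9*c3^2 - 24*c2 := Real.sq_sqrt (by linarith [sq_nonneg c3])
    have hsn : 0 ≤ s := Real.sqrt_nonneg _
    have hs3 : 3*c3 ≤ s := by
      rw [hs]
      calc 3*c3 = Real.sqrt ((3*c3)^2) := (Real.sqrt_sq (by linarith)).symm
        _ ≤ Real.sqrt (9*c3^2 - 24*c2) := Real.sqrt_le_sqrt (by linarith)
    have ha0 : 0 ≤ seq 0 := by rw [h0]; linarith
    have hQroot : 12*(seq 0)^2 + 6*c3*(seq 0) + 2*c2 = 0 := by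
      rw [h0]; linear_combination hs2 / 12
    have hQa : ∀ p, seq 0 ≤ p → 0 ≤ 12*p^2 + 6*c3*p + 2*c2 := by
      intro p hp
      linarith [hQroot, mul_nonneg (sub_nonneg.mpr hp)
        (show (0:ℝ) ≤ 12*(p + seq 0) + 6*c3 by linarith)]
    have hQle : ∀ p, 0 ≤ p → p ≤ seq 0 → 12*p^2 + 6*c3*p + 2*c2 ≤ 0 := by
      intro p hp1 hp2
      linarith [hQroot, mul_nonneg (sub_nonneg.mpr hp2)
        (show (0:ℝ) ≤ 12*(seq 0 + p) + 6*c3 by linarith)]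
    have hd : ∀ x, 0 ≤ x → x ≤ seq 0 → φ' x ≤ c1 := by
      intro x h1 h2
      have hq := hQle x h1 h2
      have h3 : 2*c2 + 3*c3*x + 4*x^2 ≤ 0 := by
        linarith [mul_nonneg hc3n h1, sq_nonneg x]
      rw [hφ']
      linarith [mul_nonpos_of_nonneg_of_nonpos h1 h3]
    by_cases hfa : 0 ≤ φ (seq 0)
    · have hapU : seq 0 ≤ pU := by
        by_contra hlt
        push_neg at hlt
        have htop := tangent_above c0 c1 c2 c3 pU (seq 0) φ φ' hφ hφ'
          (hQle pU hpU.le hlt.le) (le_of_eq hQroot)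
        have hdp := hd pU hpU.le hlt.le
        have hm1 := mul_le_mul_of_nonneg_right hdp (by linarith : (0:ℝ) ≤ seq 0 - pU)
        have hm2 := mul_neg_of_neg_of_pos hc1n (by linarith : (0:ℝ) < seq 0 - pU)
        linarith [hroot]
      exact caseI ha0 hapU hQa
    · push_neg at hfa
      have hpUa : pU < seq 0 := by
        rcases lt_or_ge pU (seq 0) with h | h
        · exact h
        · exfalso
          rcases eq_or_lt_of_le h with he | hlt2
          · rw [he] at hfa; linarith
          · linarith [hpos (seq 0) ha0 hlt2]
      have hφneg : ∀ u, pU < u → u ≤ seq 0 → φ u < 0 := by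
        intro u h1 h2
        have htop := tangent_above c0 c1 c2 c3 pU u φ φ' hφ hφ'
          (hQle pU hpU.le (by linarith)) (hQle u (by linarith) h2)
        have hdp := hd pU hpU.le (by linarith)
        have hm1 := mul_le_mul_of_nonneg_right hdp (by linarith : (0:ℝ) ≤ u - pU)
        have hm2 := mul_neg_of_neg_of_pos hc1n (by linarith : (0:ℝ) < u - pU)
        linarith [hroot]
      have hcont1 : Continuous (fun q : ℝ => -φ (-q)) := (hφc.comp continuous_neg).neg
      have hcont2 : Continuous (fun q : ℝ => φ' (-q)) := hφ'c.comp continuous_neg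
      have htanm : ∀ x y, -(seq 0) ≤ x → x ≤ -pU → -(seq 0) ≤ y → y ≤ -pU →
          -φ (-x) + φ' (-x) * (y - x) ≤ -φ (-y) := by
        intro x y hx hxr hy hyr
        have h := tangent_above c0 c1 c2 c3 (-x) (-y) φ φ' hφ hφ'
          (hQle (-x) (by linarith) (by linarith)) (hQle (-y) (by linarith) (by linarith))
        linarith [h]
      have hfposm : ∀ x, -(seq 0) ≤ x → x < -pU → 0 < -φ (-x) := by
        intro x hx hxr
        have := hφneg (-x) (by linarith) (by linarith)
        linarith
      have hrecm : ∀ n, -(seq (n+1)) = -(seq n) - (-φ (-(-(seq n)))) / φ' (-(-(seq n))) := by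
        intro n
        rw [hrec n]
        simp only [neg_neg]
        ring
      obtain ⟨hmono, hlim, hbnd, _⟩ := newton_aux (fun q => -φ (-q)) (fun q => φ' (-q))
        hcont1 hcont2 (-(seq 0)) (-pU) (by linarith)
        (by simp only [neg_neg, hroot, neg_zero]) htanm hfposm
        (fun n => -(seq n)) rfl hrecm
      refine ⟨Or.inr ?_, ?_, ?_⟩
      · intro i j hij
        have h := hmono hij
        simp only at h
        linarith
      · have h := hlim.neg
        simp only [neg_neg] at h
        exact h
      · intro n _
        have h := (hbnd n).2
        linarith
end

section
/- The physical pressure p(U) is a simple root of the quartic φ (its multiplicity is one); consequently the Newton–Raphson iteration of Algorithm NR-I converges quadratically to p(U). -/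
theorem stmt11 (D M E γ : ℝ) (hM : 0 ≤ M) (hD : 0 < D)
    (hE : Real.sqrt (D^2 + M^2) < E) (hγ1 : 1 < γ) (hγ2 : γ ≤ 2)
    (c0 c1 c2 c3 : ℝ)
    (hc0 : c0 = (M^2 - E^2) * (M^2 - E^2 + D^2) * (γ-1)^2)
    (hc1 : c1 = 2*E*(2-γ)*(M^2 - E^2)*(γ-1) - 2*E*D^2*(γ-1)^2)
    (hc2 : c2 = E^2*(γ^2 - 6*γ + 6) + 2*M^2*(γ-1) - D^2*(γ-1)^2)
    (hc3 : c3 = 2*E*(2-γ))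
    (φ : ℝ → ℝ) (hφ : ∀ p, φ p = c0 + c1*p + c2*p^2 + c3*p^3 + p^4)
    (pU pa : ℝ) (hlt : 0 < pU) (hlt2 : pU < pa)
    (hrootU : φ pU = 0) (hroota : φ pa = 0)
    (honly : ∀ p, 0 < p → φ p = 0 → p = pU ∨ p = pa) :
    φ pU = 0 ∧ deriv φ pU ≠ 0 := by
  have hφfun : φ = fun p => c0 + c1*p + c2*p^2 + c3*p^3 + p^4 := funext hφ
  -- basic positivity facts
  have hsq : Real.sqrt (D^2 + M^2) ^ 2 = D^2 + M^2 :=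
    Real.sq_sqrt (by positivity)
  have hE0 : 0 < E := lt_of_le_of_lt (Real.sqrt_nonneg _) hE
  have hE2 : D^2 + M^2 < E^2 := by
    nlinarith [Real.sqrt_nonneg (D^2 + M^2), hsq, hE]
  have hc0pos : 0 < c0 := by
    have hA : 0 < E^2 - M^2 := by nlinarith
    have hB : 0 < E^2 - M^2 - D^2 := by nlinarith
    have hg : 0 < (γ-1)^2 := pow_pos (by linarith) 2
    have heq : c0 = ((E^2 - M^2) * (E^2 - M^2 - D^2)) * (γ-1)^2 := by rw [hc0]; ring
    rw [heq]
    exact mul_pos (mul_pos hA hB) hg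
  have hc3nn : 0 ≤ c3 := by rw [hc3]; nlinarith
  -- compute the derivative
  have hderiv : HasDerivAt φ (c1 + 2*c2*pU + 3*c3*pU^2 + 4*pU^3) pU := by
    rw [hφfun]
    have h1 : HasDerivAt (fun p : ℝ => p) 1 pU := hasDerivAt_id pU
    have h2 : HasDerivAt (fun p : ℝ => p^2) (2*pU) pU := by
      simpa using hasDerivAt_pow 2 pU
    have h3 : HasDerivAt (fun p : ℝ => p^3) (3*pU^2) pU := by
      simpa using hasDerivAt_pow 3 pU
    have h4 : HasDerivAt (fun p : ℝ => p^4) (4*pU^3) pU := by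
      simpa using hasDerivAt_pow 4 pU
    have := (((h1.const_mul c1).add (h2.const_mul c2)).add (h3.const_mul c3)).add h4
    have := this.const_add c0
    refine HasDerivAt.congr_deriv (HasDerivAt.congr_of_eventuallyEq this (Filter.Eventually.of_forall fun p => ?_)) ?_
    · simp only [Pi.add_apply]; ring
    · ring
  refine ⟨hrootU, fun hd => ?_⟩
  have e3 : c1 + 2*c2*pU + 3*c3*pU^2 + 4*pU^3 = 0 := by
    rw [← hderiv.deriv]; exact hd
  have e1 : c0 + c1*pU + c2*pU^2 + c3*pU^3 + pU^4 = 0 := by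
    rw [← hφ pU]; exact hrootU
  have e2 : c0 + c1*pa + c2*pa^2 + c3*pa^3 + pa^4 = 0 := by
    rw [← hφ pa]; exact hroota
  have key : (pa - pU)^2 * (pU^2*pa^2 + (c3 + 2*pU)*pU^2*pa + c0) = 0 := by
    linear_combination pU^2 * e2 + pa*(pa - 2*pU) * e1 + pU*pa*(pU - pa) * e3
  have hpa0 : 0 < pa := hlt.trans hlt2
  have hpos : 0 < (pa - pU)^2 * (pU^2*pa^2 + (c3 + 2*pU)*pU^2*pa + c0) := by
    have hb : 0 < c3 + 2*pU := by linarith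
    have t1 : 0 < pU^2*pa^2 := mul_pos (pow_pos hlt 2) (pow_pos hpa0 2)
    have t2 : 0 < (c3 + 2*pU)*pU^2*pa := mul_pos (mul_pos hb (pow_pos hlt 2)) hpa0
    have hinner : 0 < pU^2*pa^2 + (c3 + 2*pU)*pU^2*pa + c0 := by linarith
    exact mul_pos (pow_pos (by linarith) 2) hinner
  linarith [key, hpos]
end

section
/- The point p_c^u = ((γ-2)E + sqrt((2-γ)^2 E^2 - 4(γ-1)[(|m|^2 - E^2) + D·sqrt(E^2 - |m|^2)]))/2 satisfies p(U) < p_c^u < p_b^u, i.e., p_c^u is a strictly better (closer) upper bound for the physical pressure than p_b^u. -/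
set_option maxHeartbeats 1000000 in
theorem stmt13 (D M E γ : ℝ) (hM : 0 ≤ M) (hD : 0 < D)
    (hE : Real.sqrt (D^2 + M^2) < E) (hγ1 : 1 < γ) (hγ2 : γ ≤ 2)
    (Φ h3 : ℝ → ℝ)
    (hΦ : ∀ p, Φ p = p/(γ-1) - E + M^2/(E+p) + D * Real.sqrt (1 - M^2/(E+p)^2))
    (hh3 : ∀ p, h3 p = M^2 + (E+p) * (p/(γ-1) - E))
    (pU pbu : ℝ)
    (hpU : 0 < pU ∧ Φ pU = 0 ∧ ∀ p, 0 < p → Φ p = 0 → p = pU)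
    (hpbu : 0 < pbu ∧ h3 pbu = 0 ∧ ∀ p, 0 < p → h3 p = 0 → p = pbu)
    (pcu : ℝ)
    (hpcu : pcu = ((γ-2)*E + Real.sqrt ((2-γ)^2*E^2
      - 4*(γ-1)*((M^2 - E^2) + D * Real.sqrt (E^2 - M^2))))/2) :
    pU < pcu ∧ pcu < pbu := by
  have hγ0 : (0:ℝ) < γ - 1 := by linarith
  have hγ0' : γ - 1 ≠ 0 := ne_of_gt hγ0
  have hE0 : 0 < E := lt_of_le_of_lt (Real.sqrt_nonneg _) hE
  have hEsq : D^2 + M^2 < E^2 := by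
    nlinarith [Real.sq_sqrt (by positivity : (0:ℝ) ≤ D^2 + M^2),
      Real.sqrt_nonneg (D^2 + M^2)]
  set s := Real.sqrt (E^2 - M^2) with hs
  have hs2 : s^2 = E^2 - M^2 := Real.sq_sqrt (by nlinarith)
  have hs0 : 0 ≤ s := Real.sqrt_nonneg _
  have hsD : D < s := by nlinarith
  -- discriminant facts
  have hq : (M^2 - E^2) + D * s < 0 := by nlinarith
  have hdisc0 : 0 ≤ (2-γ)^2*E^2 - 4*(γ-1)*((M^2 - E^2) + D * s) := by nlinarith
  have hsd : Real.sqrt ((2-γ)^2*E^2 - 4*(γ-1)*((M^2 - E^2) + D * s)) ^ 2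
      = (2-γ)^2*E^2 - 4*(γ-1)*((M^2 - E^2) + D * s) := Real.sq_sqrt hdisc0
  have hsdnn : 0 ≤ Real.sqrt ((2-γ)^2*E^2 - 4*(γ-1)*((M^2 - E^2) + D * s)) :=
    Real.sqrt_nonneg _
  have hsdgt : (2-γ)*E < Real.sqrt ((2-γ)^2*E^2 - 4*(γ-1)*((M^2 - E^2) + D * s)) := by
    nlinarith [mul_nonneg (by linarith : (0:ℝ) ≤ 2 - γ) hE0.le]
  have h2p : 2*pcu = (γ-2)*E
      + Real.sqrt ((2-γ)^2*E^2 - 4*(γ-1)*((M^2 - E^2) + D * s)) := by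
    rw [hpcu]; ring
  have hpcu0 : 0 < pcu := by nlinarith
  have hquad : pcu^2 + (2-γ)*E*pcu + (γ-1)*((M^2 - E^2) + D * s) = 0 := by
    have hsub : Real.sqrt ((2-γ)^2*E^2 - 4*(γ-1)*((M^2 - E^2) + D * s))
        = 2*pcu - (γ-2)*E := by linarith
    rw [hsub] at hsd
    linear_combination (1/4) * hsd
  -- value of h3 at pcu
  have hval : h3 pcu = -(D*s) := by
    rw [hh3]
    field_simp
    linear_combination hquad
  -- monotonicity of h3 on [0, ∞)
  have hk1 : 1 ≤ (γ-1)⁻¹ := by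
    rw [le_inv_comm₀ one_pos hγ0]; linarith
  have hmono : ∀ a b : ℝ, 0 ≤ a → a ≤ b → h3 a ≤ h3 b := by
    intro a b ha hab
    rw [hh3, hh3, div_eq_mul_inv, div_eq_mul_inv]
    have key : 0 ≤ (b - a) * ((γ-1)⁻¹*(E+a+b) - E) := by
      apply mul_nonneg (by linarith)
      have h5 : (1:ℝ)*(E+a+b) ≤ (γ-1)⁻¹*(E+a+b) :=
        mul_le_mul_of_nonneg_right hk1 (by linarith)
      linarith
    have expand : (M^2 + (E+b)*(b*(γ-1)⁻¹ - E)) - (M^2 + (E+a)*(a*(γ-1)⁻¹ - E))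
        = (b - a) * ((γ-1)⁻¹*(E+a+b) - E) := by ring
    linarith [key, expand]
  -- the function g p = (E+p) Φ p
  have hΦg : ∀ p : ℝ, 0 ≤ p →
      (E+p) * Φ p = h3 p + D * Real.sqrt ((E+p)^2 - M^2) := by
    intro p hp
    have hEp : 0 < E + p := by linarith
    have hM2 : 0 ≤ (E+p)^2 - M^2 := by
      have h6 : (E+p)^2 - M^2 = s^2 + (2*E*p + p^2) := by rw [hs2]; ring
      rw [h6]; positivity
    have hsq : Real.sqrt (1 - M^2/(E+p)^2)
        = Real.sqrt ((E+p)^2 - M^2) / (E+p) := by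
      rw [show 1 - M^2/(E+p)^2 = ((E+p)^2 - M^2)/(E+p)^2 by field_simp,
        Real.sqrt_div hM2, Real.sqrt_sq hEp.le]
    rw [hΦ, hh3, hsq]
    field_simp
    ring
  -- g pU = 0
  have hgU : h3 pU + D * Real.sqrt ((E+pU)^2 - M^2) = 0 := by
    have h := hΦg pU hpU.1.le
    rw [hpU.2.1, mul_zero] at h
    linarith
  -- g pcu > 0
  have hgc : 0 < h3 pcu + D * Real.sqrt ((E+pcu)^2 - M^2) := by
    rw [hval]
    have hlt : s < Real.sqrt ((E+pcu)^2 - M^2) :=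
      Real.sqrt_lt_sqrt (by nlinarith) (by nlinarith)
    nlinarith [hlt]
  constructor
  · by_contra h
    push_neg at h
    have h1 := hmono pcu pU hpcu0.le h
    have h2 : Real.sqrt ((E+pcu)^2 - M^2) ≤ Real.sqrt ((E+pU)^2 - M^2) :=
      Real.sqrt_le_sqrt (by nlinarith [hpU.1])
    nlinarith [h1, h2]
  · by_contra h
    push_neg at h
    have h1 := hmono pbu pcu hpbu.1.le h
    rw [hpbu.2.1, hval] at h1
    nlinarith
end

section
/- If D < (E^2 - |m|^2)/E, then for every p_n ≥ 0 the Newton step p_{n+1} = p_n - ψ(p_n)/ψ'(p_n) satisfies p_{n+1} > 0. Consequently, by induction, the Newton–Raphson iteration for ψ(p) = 0 starting from any p0 ≥ 0 produces a sequence of positive iterates. -/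
theorem stmt14 (D M E γ : ℝ) (hM : 0 ≤ M) (hD : 0 < D)
    (hE : Real.sqrt (D^2 + M^2) < E) (hγ1 : 1 < γ) (hγ2 : γ ≤ 2)
    (hDsmall : D < (E^2 - M^2)/E)
    (ψ ψ' : ℝ → ℝ)
    (hψ : ∀ p, ψ p = M^2 + (E+p) * (p/(γ-1) - E) + D * Real.sqrt ((E+p)^2 - M^2))
    (hψ' : ∀ p, ψ' p = (2*p + (2-γ)*E)/(γ-1) + D*(E+p)/Real.sqrt ((E+p)^2 - M^2)) :
    (∀ pn : ℝ, 0 ≤ pn → 0 < pn - ψ pn / ψ' pn) ∧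
    (∀ seq : ℕ → ℝ, 0 ≤ seq 0 →
      (∀ n, seq (n+1) = seq n - ψ (seq n) / ψ' (seq n)) →
      ∀ n, 1 ≤ n → 0 < seq n) := by
  have hE0 : 0 < E := lt_of_le_of_lt (Real.sqrt_nonneg _) hE
  have hγ : 0 < γ - 1 := by linarith
  have hD2 : D^2 + M^2 < E^2 := by
    have h1 : Real.sqrt (D^2 + M^2) ^ 2 = D^2 + M^2 := Real.sq_sqrt (by positivity)
    nlinarith [Real.sqrt_nonneg (D^2 + M^2)]
  have hDE : D * E < E^2 - M^2 := by
    rw [lt_div_iff₀ hE0] at hDsmall; linarith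
  have step : ∀ p : ℝ, 0 ≤ p → 0 < p - ψ p / ψ' p := by
    intro p hp
    set s := Real.sqrt ((E+p)^2 - M^2) with hsdef
    have hsq : 0 < (E+p)^2 - M^2 := by nlinarith
    have hs : 0 < s := Real.sqrt_pos.2 hsq
    have hs2 : s^2 = (E+p)^2 - M^2 := Real.sq_sqrt hsq.le
    have hA : E*(E+p) - M^2 ≤ E * s := by
      nlinarith [sq_nonneg M, mul_pos hE0 hs, sq_nonneg (E*(E+p) - M^2 + E*s)]
    have hψ'pos : 0 < ψ' p := by
      rw [hψ' p]
      have h1 : 0 ≤ (2*p + (2-γ)*E)/(γ-1) := div_nonneg (by nlinarith) hγ.le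
      have h2 : 0 < D*(E+p)/s := by positivity
      linarith
    have hlt : ψ p < p * ψ' p := by
      rw [hψ p, hψ' p, ← sub_pos]
      have hform : p * ((2*p + (2-γ)*E)/(γ-1) + D*(E+p)/s)
          - (M^2 + (E+p) * (p/(γ-1) - E) + D * s)
          = p^2/(γ-1) + (E^2 - M^2 - D*(E*(E+p)-M^2)/s) := by
        field_simp
        linear_combination (-(D*(γ-1))) * hs2
      rw [hform]
      have h3 : D*(E*(E+p)-M^2)/s ≤ D*E := by
        rw [div_le_iff₀ hs]
        nlinarith
      have h4 : 0 ≤ p^2/(γ-1) := by positivity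
      linarith
    rw [sub_pos, div_lt_iff₀ hψ'pos]
    exact hlt
  refine ⟨step, ?_⟩
  intro seq h0 hrec n hn
  have hnn : ∀ k, 0 ≤ seq k := by
    intro k
    induction k with
    | zero => exact h0
    | succ j ih => rw [hrec j]; exact (step (seq j) ih).le
  cases n with
  | zero => omega
  | succ k => rw [hrec k]; exact step (seq k) (hnn k)
end

section
/- For fixed γ ∈ (1,2), m, and E with E > |m|, the larger positive root p_a^u of the quartic φ (which depends on D) and the smaller positive root p(U) both converge to p_b^u as D → 0+; in particular |p_a^u - p(U)| → 0 as D → 0+. -/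
theorem stmt16 (M E γ : ℝ) (hM : 0 ≤ M) (hME : M < E)
    (hγ1 : 1 < γ) (hγ2 : γ < 2)
    (h3 : ℝ → ℝ) (hh3 : ∀ p, h3 p = M^2 + (E+p) * (p/(γ-1) - E))
    (φ : ℝ → ℝ → ℝ)
    (hφ : ∀ D p, φ D p = (γ-1)^2 * ((h3 p)^2 - D^2 * ((E+p)^2 - M^2)))
    (pbu : ℝ) (hpbu : 0 < pbu ∧ h3 pbu = 0)
    (pU pa : ℝ → ℝ)
    (hpU : ∀ D, 0 < D → Real.sqrt (D^2 + M^2) < E →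
      0 < pU D ∧ pU D < pbu ∧ φ D (pU D) = 0)
    (hpa : ∀ D, 0 < D → Real.sqrt (D^2 + M^2) < E →
      pbu < pa D ∧ φ D (pa D) = 0) :
    Filter.Tendsto pU (nhdsWithin 0 (Set.Ioi 0)) (nhds pbu) ∧
    Filter.Tendsto pa (nhdsWithin 0 (Set.Ioi 0)) (nhds pbu) ∧
    Filter.Tendsto (fun D => |pa D - pU D|) (nhdsWithin 0 (Set.Ioi 0)) (nhds 0) := by
  obtain ⟨hb, hz⟩ := hpbu
  have hγ : 0 < γ - 1 := by linarith
  have hγne : γ - 1 ≠ 0 := ne_of_gt hγ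
  have hE : 0 < E := lt_of_le_of_lt hM hME
  have hB0 : 0 < E * (2 - γ) := mul_pos hE (by linarith)
  set B : ℝ := E * (2 - γ) with hBdef
  have key : ∀ p, (γ - 1) * h3 p = (p - pbu) * (p + pbu + B) := by
    intro p
    have h0 : (γ - 1) * h3 pbu = 0 := by rw [hz]; ring
    rw [hh3 pbu] at h0
    rw [hh3 p, hBdef]
    field_simp at h0 ⊢
    linear_combination h0
  set C : ℝ := (γ - 1) * (E + pbu) / pbu with hCdef
  have hCpos : 0 < C := by positivity
  set δ : ℝ := Real.sqrt (E ^ 2 - M ^ 2) with hδdef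
  have hδ0 : 0 < δ := Real.sqrt_pos.mpr (by nlinarith)
  have hmem : Set.Ioo (0 : ℝ) δ ∈ nhdsWithin (0 : ℝ) (Set.Ioi 0) :=
    Ioo_mem_nhdsGT_of_mem ⟨le_refl 0, hδ0⟩
  have main : ∀ D ∈ Set.Ioo (0 : ℝ) δ, |pU D - pbu| ≤ C * D ∧ |pa D - pbu| ≤ C * D := by
    intro D hD
    obtain ⟨hD0, hDδ⟩ := hD
    have hDE : Real.sqrt (D ^ 2 + M ^ 2) < E := by
      rw [Real.sqrt_lt' hE]
      have h1 : D ^ 2 < δ ^ 2 := by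
        have := pow_lt_pow_left₀ hDδ hD0.le (n := 2) two_ne_zero
        simpa using this
      have h2 : δ ^ 2 = E ^ 2 - M ^ 2 := Real.sq_sqrt (by nlinarith)
      linarith
    obtain ⟨hU0, hUb, hUφ⟩ := hpU D hD0 hDE
    obtain ⟨hab, haφ⟩ := hpa D hD0 hDE
    rw [hφ] at hUφ haφ
    have hγsq : ((γ - 1) ^ 2 : ℝ) ≠ 0 := by positivity
    have eU : (h3 (pU D)) ^ 2 = D ^ 2 * ((E + pU D) ^ 2 - M ^ 2) := by
      have := (mul_eq_zero.mp hUφ).resolve_left hγsq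
      linarith
    have ea : (h3 (pa D)) ^ 2 = D ^ 2 * ((E + pa D) ^ 2 - M ^ 2) := by
      have := (mul_eq_zero.mp haφ).resolve_left hγsq
      linarith
    have kU := key (pU D)
    have ka := key (pa D)
    constructor
    · -- pU bound
      rw [abs_of_nonpos (by linarith)]
      have hS : pbu ≤ pU D + pbu + B := by linarith
      have h1 : ((pbu - pU D) * (pU D + pbu + B)) ^ 2
          = (γ - 1) ^ 2 * (h3 (pU D)) ^ 2 := by
        linear_combination (-((pU D - pbu) * (pU D + pbu + B)) - (γ - 1) * h3 (pU D)) * kU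
      have hle : (E + pU D) ^ 2 - M ^ 2 ≤ (E + pbu) ^ 2 := by
        have := pow_le_pow_left₀ (show (0:ℝ) ≤ E + pU D by linarith)
          (show E + pU D ≤ E + pbu by linarith) 2
        linarith [this, sq_nonneg M]
      have hmul := mul_le_mul_of_nonneg_left hle
        (show (0:ℝ) ≤ (γ - 1) ^ 2 * D ^ 2 by positivity)
      have hsq : ((pbu - pU D) * (pU D + pbu + B)) ^ 2
          ≤ ((γ - 1) * D * (E + pbu)) ^ 2 := by
        calc ((pbu - pU D) * (pU D + pbu + B)) ^ 2
            = (γ - 1) ^ 2 * (h3 (pU D)) ^ 2 := h1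
          _ = (γ - 1) ^ 2 * D ^ 2 * ((E + pU D) ^ 2 - M ^ 2) := by rw [eU]; ring
          _ ≤ (γ - 1) ^ 2 * D ^ 2 * (E + pbu) ^ 2 := hmul
          _ = ((γ - 1) * D * (E + pbu)) ^ 2 := by ring
      have hpos1 : (0:ℝ) < (pbu - pU D) * (pU D + pbu + B) :=
        mul_pos (by linarith) (by linarith)
      have hpos2 : (0:ℝ) < (γ - 1) * D * (E + pbu) := by positivity
      have hXS : (pbu - pU D) * (pU D + pbu + B) ≤ (γ - 1) * D * (E + pbu) :=
        (pow_le_pow_iff_left₀ hpos1.le hpos2.le two_ne_zero).mp hsq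
      have hXpbu : (pbu - pU D) * pbu ≤ (γ - 1) * D * (E + pbu) :=
        le_trans (mul_le_mul_of_nonneg_left hS
          (show (0:ℝ) ≤ pbu - pU D by linarith)) hXS
      rw [hCdef, div_mul_eq_mul_div, le_div_iff₀ hb]
      linarith [hXpbu]
    · -- pa bound
      rw [abs_of_nonneg (by linarith)]
      have hpa0 : (0:ℝ) < pa D := by linarith
      have hS : pa D ≤ pa D + pbu + B := by linarith
      have h1 : ((pa D - pbu) * (pa D + pbu + B)) ^ 2
          = (γ - 1) ^ 2 * (h3 (pa D)) ^ 2 := by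
        linear_combination (-((pa D - pbu) * (pa D + pbu + B)) - (γ - 1) * h3 (pa D)) * ka
      have hEa : (E + pa D) * pbu ≤ pa D * (E + pbu) := by
        have e : pa D * (E + pbu) - (E + pa D) * pbu = E * (pa D - pbu) := by ring
        have hprod : (0:ℝ) ≤ E * (pa D - pbu) := mul_nonneg hE.le (by linarith)
        linarith [e, hprod]
      have h2 : ((E + pa D) * pbu) ^ 2 ≤ (pa D * (E + pbu)) ^ 2 :=
        pow_le_pow_left₀ (by positivity) hEa 2
      have h3' : ((E + pa D) ^ 2 - M ^ 2) * pbu ^ 2 ≤ (pa D * (E + pbu)) ^ 2 := by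
        have e : ((E + pa D) ^ 2 - M ^ 2) * pbu ^ 2
            = ((E + pa D) * pbu) ^ 2 - (M * pbu) ^ 2 := by ring
        linarith [h2, sq_nonneg (M * pbu), e]
      have hmul := mul_le_mul_of_nonneg_left h3'
        (show (0:ℝ) ≤ (γ - 1) ^ 2 * D ^ 2 by positivity)
      have hsq : (((pa D - pbu) * (pa D + pbu + B)) * pbu) ^ 2
          ≤ ((γ - 1) * D * (E + pbu) * pa D) ^ 2 := by
        calc (((pa D - pbu) * (pa D + pbu + B)) * pbu) ^ 2
            = (γ - 1) ^ 2 * (h3 (pa D)) ^ 2 * pbu ^ 2 := by rw [← h1]; ring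
          _ = (γ - 1) ^ 2 * D ^ 2 * (((E + pa D) ^ 2 - M ^ 2) * pbu ^ 2) := by rw [ea]; ring
          _ ≤ (γ - 1) ^ 2 * D ^ 2 * (pa D * (E + pbu)) ^ 2 := hmul
          _ = ((γ - 1) * D * (E + pbu) * pa D) ^ 2 := by ring
      have hpos1 : (0:ℝ) < ((pa D - pbu) * (pa D + pbu + B)) * pbu :=
        mul_pos (mul_pos (by linarith) (by linarith)) hb
      have hpos2 : (0:ℝ) < (γ - 1) * D * (E + pbu) * pa D := by positivity
      have hXS : ((pa D - pbu) * (pa D + pbu + B)) * pbu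
          ≤ (γ - 1) * D * (E + pbu) * pa D :=
        (pow_le_pow_iff_left₀ hpos1.le hpos2.le two_ne_zero).mp hsq
      have hXpa : ((pa D - pbu) * pa D) * pbu ≤ (γ - 1) * D * (E + pbu) * pa D :=
        le_trans (mul_le_mul_of_nonneg_right
          (mul_le_mul_of_nonneg_left hS (show (0:ℝ) ≤ pa D - pbu by linarith)) hb.le)
          hXS
      rw [hCdef, div_mul_eq_mul_div, le_div_iff₀ hb]
      have h4 : ((pa D - pbu) * pbu) * pa D ≤ ((γ - 1) * (E + pbu) * D) * pa D := by
        have e1 : ((pa D - pbu) * pbu) * pa D = ((pa D - pbu) * pa D) * pbu := by ring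
        have e2 : ((γ - 1) * (E + pbu) * D) * pa D
            = (γ - 1) * D * (E + pbu) * pa D := by ring
        rw [e1, e2]; exact hXpa
      exact le_of_mul_le_mul_right h4 hpa0
  have hCD : Filter.Tendsto (fun D : ℝ => C * D) (nhdsWithin 0 (Set.Ioi 0)) (nhds 0) := by
    have h1 : Filter.Tendsto (fun D : ℝ => C * D) (nhds 0) (nhds (C * 0)) :=
      (continuous_const.mul continuous_id).tendsto 0
    simpa using h1.mono_left nhdsWithin_le_nhds
  have hev1 : ∀ᶠ D in nhdsWithin (0:ℝ) (Set.Ioi 0), |pU D - pbu| ≤ C * D :=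
    Filter.eventually_of_mem hmem fun D hD => (main D hD).1
  have hev2 : ∀ᶠ D in nhdsWithin (0:ℝ) (Set.Ioi 0), |pa D - pbu| ≤ C * D :=
    Filter.eventually_of_mem hmem fun D hD => (main D hD).2
  have t1 : Filter.Tendsto pU (nhdsWithin 0 (Set.Ioi 0)) (nhds pbu) := by
    rw [tendsto_iff_dist_tendsto_zero]
    refine squeeze_zero' (Filter.Eventually.of_forall fun D => dist_nonneg) ?_ hCD
    filter_upwards [hev1] with D hD
    simpa [Real.dist_eq] using hD
  have t2 : Filter.Tendsto pa (nhdsWithin 0 (Set.Ioi 0)) (nhds pbu) := by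
    rw [tendsto_iff_dist_tendsto_zero]
    refine squeeze_zero' (Filter.Eventually.of_forall fun D => dist_nonneg) ?_ hCD
    filter_upwards [hev2] with D hD
    simpa [Real.dist_eq] using hD
  refine ⟨t1, t2, ?_⟩
  have hCD2 : Filter.Tendsto (fun D : ℝ => C * D + C * D)
      (nhdsWithin 0 (Set.Ioi 0)) (nhds 0) := by
    simpa using hCD.add hCD
  refine squeeze_zero' (Filter.Eventually.of_forall fun D => abs_nonneg _) ?_ hCD2
  filter_upwards [hev1, hev2] with D h1 h2
  calc |pa D - pU D| ≤ |pa D - pbu| + |pbu - pU D| := abs_sub_le _ _ _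
    _ = |pa D - pbu| + |pU D - pbu| := by rw [abs_sub_comm pbu (pU D)]
    _ ≤ C * D + C * D := add_le_add h2 h1
end

section
/- For fixed conservative quantities D, m, E with D > 0 and E > sqrt(D^2 + |m|^2), if 1 < γ < 1.2 then both positive roots of the quartic φ are bounded above by -c1/(0.2 E^2) = 10(γ-1)·(E(2-γ)(E^2 - |m|^2) + E D^2(γ-1))/E^2; consequently both positive roots, and their difference, tend to 0 as γ → 1+. -/
set_option maxHeartbeats 1000000

theorem stmt17 (D M E : ℝ) (hM : 0 ≤ M) (hD : 0 < D)
    (hE : Real.sqrt (D^2 + M^2) < E)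
    (φ : ℝ → ℝ → ℝ)
    (hφ : ∀ γ p, φ γ p =
      (M^2 - E^2) * (M^2 - E^2 + D^2) * (γ-1)^2
      + (2*E*(2-γ)*(M^2 - E^2)*(γ-1) - 2*E*D^2*(γ-1)^2) * p
      + (E^2*(γ^2 - 6*γ + 6) + 2*M^2*(γ-1) - D^2*(γ-1)^2) * p^2
      + (2*E*(2-γ)) * p^3 + p^4) :
    (∀ γ, 1 < γ → γ < 1.2 → ∀ p, 0 < p → φ γ p = 0 →
      p ≤ 10*(γ-1)*(E*(2-γ)*(E^2 - M^2) + E*D^2*(γ-1))/E^2) ∧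
    (∀ r1 r2 : ℝ → ℝ,
      (∀ γ, 1 < γ → γ < 1.2 → (0 < r1 γ ∧ φ γ (r1 γ) = 0) ∧
        (0 < r2 γ ∧ φ γ (r2 γ) = 0)) →
      Filter.Tendsto r1 (nhdsWithin 1 (Set.Ioi 1)) (nhds 0) ∧
      Filter.Tendsto r2 (nhdsWithin 1 (Set.Ioi 1)) (nhds 0) ∧
      Filter.Tendsto (fun γ => |r1 γ - r2 γ|) (nhdsWithin 1 (Set.Ioi 1)) (nhds 0)) := by
  have hE0 : 0 < E := lt_of_le_of_lt (Real.sqrt_nonneg _) hE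
  have hE2 : D^2 + M^2 < E^2 := by
    have := (Real.sqrt_lt' hE0).mp hE
    linarith
  have hE2pos : (0:ℝ) < E^2 := by positivity
  -- main bound
  have key : ∀ γ, 1 < γ → γ < 1.2 → ∀ p, 0 < p → φ γ p = 0 →
      p ≤ 10*(γ-1)*(E*(2-γ)*(E^2 - M^2) + E*D^2*(γ-1))/E^2 := by
    intro γ h1 h2 p hp hroot
    rw [hφ] at hroot
    have hc2 : 0.2*E^2 ≤ E^2*(γ^2 - 6*γ + 6) + 2*M^2*(γ-1) - D^2*(γ-1)^2 := by
      nlinarith [mul_nonneg (by nlinarith : (0:ℝ) ≤ E^2 - D^2) (sq_nonneg (γ-1)),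
        mul_pos hE2pos (by linarith : (0:ℝ) < 1.2 - γ),
        mul_nonneg (mul_nonneg hM hM) (by linarith : (0:ℝ) ≤ γ-1)]
    have hc0 : 0 ≤ (M^2 - E^2) * (M^2 - E^2 + D^2) * (γ-1)^2 := by
      have : 0 < (M^2 - E^2) * (M^2 - E^2 + D^2) := by nlinarith
      positivity
    have hc3 : 0 ≤ (2*E*(2-γ)) * p^3 := by
      have : 0 < 2*E*(2-γ) := by nlinarith
      positivity
    have hp4 : 0 ≤ p^4 := by positivity
    have hc2p : 0.2*E^2*p^2 ≤ (E^2*(γ^2 - 6*γ + 6) + 2*M^2*(γ-1) - D^2*(γ-1)^2)*p^2 :=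
      mul_le_mul_of_nonneg_right hc2 (sq_nonneg p)
    have hstep : 0.2*E^2*p ≤ -(2*E*(2-γ)*(M^2 - E^2)*(γ-1) - 2*E*D^2*(γ-1)^2) := by
      have h : (0.2*E^2*p)*p ≤ (-(2*E*(2-γ)*(M^2 - E^2)*(γ-1) - 2*E*D^2*(γ-1)^2)) * p := by
        linarith [hroot, hc0, hc3, hp4, hc2p]
      exact le_of_mul_le_mul_right h hp
    rw [le_div_iff₀ hE2pos]
    linarith
  refine ⟨key, ?_⟩
  intro r1 r2 hr
  have hBcont : Continuous (fun γ : ℝ => 10*(γ-1)*(E*(2-γ)*(E^2 - M^2) + E*D^2*(γ-1))/E^2) := by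
    continuity
  have hB : Filter.Tendsto (fun γ : ℝ => 10*(γ-1)*(E*(2-γ)*(E^2 - M^2) + E*D^2*(γ-1))/E^2)
      (nhdsWithin 1 (Set.Ioi 1)) (nhds 0) := by
    have := hBcont.tendsto 1
    simp only [sub_self, mul_zero, zero_mul, mul_one, zero_div] at this
    exact this.mono_left nhdsWithin_le_nhds
  have hsmall : ∀ᶠ γ in nhdsWithin (1:ℝ) (Set.Ioi 1), γ < 1.2 := by
    apply eventually_nhdsWithin_of_eventually_nhds
    exact eventually_lt_nhds (by norm_num)
  have hgt : ∀ᶠ γ in nhdsWithin (1:ℝ) (Set.Ioi 1), 1 < γ := eventually_mem_nhdsWithin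
  have sq : ∀ r : ℝ → ℝ, (∀ γ, 1 < γ → γ < 1.2 → 0 < r γ ∧ φ γ (r γ) = 0) →
      Filter.Tendsto r (nhdsWithin 1 (Set.Ioi 1)) (nhds 0) := by
    intro r hrr
    apply squeeze_zero'
    · filter_upwards [hsmall, hgt] with γ h2 h1
      exact (hrr γ h1 h2).1.le
    · filter_upwards [hsmall, hgt] with γ h2 h1
      exact key γ h1 h2 (r γ) (hrr γ h1 h2).1 (hrr γ h1 h2).2
    · exact hB
  have h1 := sq r1 (fun γ a b => (hr γ a b).1)
  have h2 := sq r2 (fun γ a b => (hr γ a b).2)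
  refine ⟨h1, h2, ?_⟩
  have := (h1.sub h2).abs
  simpa using this
end

section
/- If U = (D, m, E) satisfies D > 0 and E > sqrt(D^2 + |m|^2), and p > 0 is a pressure satisfying the recovery equation Φ(p) = 0, then the recovered velocity v = m/(E+p) satisfies |v| < 1 and the recovered rest-mass density ρ = D·sqrt(1 - |v|^2) is positive. -/
theorem stmt18 (d : ℕ) (D E γ p : ℝ) (m : EuclideanSpace ℝ (Fin d))
    (hD : 0 < D) (hE : Real.sqrt (D^2 + ‖m‖^2) < E)
    (hγ1 : 1 < γ) (hγ2 : γ ≤ 2) (hp : 0 < p)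
    (hΦ : p/(γ-1) - E + ‖m‖^2/(E+p)
      + D * Real.sqrt (1 - ‖m‖^2/(E+p)^2) = 0) :
    ‖(E+p)⁻¹ • m‖ < 1 ∧
    0 < D * Real.sqrt (1 - ‖(E+p)⁻¹ • m‖^2) := by
  have hmE : ‖m‖ < E := by
    calc ‖m‖ = Real.sqrt (‖m‖^2) := (Real.sqrt_sq (norm_nonneg m)).symm
    _ ≤ Real.sqrt (D^2 + ‖m‖^2) := by
        apply Real.sqrt_le_sqrt; nlinarith [sq_nonneg D]
    _ < E := hE
  have hEp : 0 < E + p := by nlinarith [norm_nonneg m]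
  have hv : ‖(E+p)⁻¹ • m‖ < 1 := by
    rw [norm_smul, Real.norm_eq_abs, abs_inv, abs_of_pos hEp]
    rw [inv_mul_lt_iff₀ hEp]
    linarith
  refine ⟨hv, ?_⟩
  have h1 : 0 < 1 - ‖(E+p)⁻¹ • m‖^2 := by nlinarith [norm_nonneg ((E+p)⁻¹ • m)]
  exact mul_pos hD (Real.sqrt_pos.mpr h1)
end
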